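/- Let G be a Polish group acting topometrically on a Polish topometric space X with ample generics, and let 𝒪_n ⊆ X^n be the set of generic n-tuples (those whose orbit has comeagre ∂-closure). Then 𝒪_n = { x̄ ∈ X^n : for comeagrely many y ∈ X, (x̄,y) ∈ 𝒪_{n+1} }. -/

import Mathlib

/-- The supremum metric on tuples induced by a metric `D`. -/
noncomputable def supMet {X : Type*} (D : X → X → ℝ) {n : ℕ} (x y : Fin n → X) : ℝ :=
  ⨆ i : Fin n, D (x i) (y i)

/-- The orbit of a tuple under the diagonal action associated to `a : G → X → X`. -/
def orbitTup {G X : Type*} (a : G → X → X) {n : ℕ} (x : Fin n → X) : Set (Fin n → X) :=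
  {y | ∃ g : G, ∀ i, a g (x i) = y i}

/-- The open `ε`-enlargement of a set of tuples with respect to the sup metric of `D`. -/
def encl {X : Type*} (D : X → X → ℝ) {n : ℕ} (ε : ℝ) (A : Set (Fin n → X)) :
    Set (Fin n → X) :=
  {x | ∃ y ∈ A, supMet D x y < ε}

/-- The closure of a set of tuples in the sup metric of `D`. -/
def metCl {X : Type*} (D : X → X → ℝ) {n : ℕ} (A : Set (Fin n → X)) :
    Set (Fin n → X) :=
  {x | ∀ ε > (0 : ℝ), ∃ y ∈ A, supMet D x y < ε}

/-- The set of generic `n`-tuples: those whose orbit has comeagre `D`-closure. -/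
def generics {G X : Type*} [TopologicalSpace X] (D : X → X → ℝ) (a : G → X → X)
    (n : ℕ) : Set (Fin n → X) :=
  {x | metCl D (orbitTup a x) ∈ residual (Fin n → X)}

/-!
Any two comeagre sets meet, so the orbits of two generic tuples come arbitrarily close: a generic
`x` lies in the `∂`-closure of the orbit of every generic `x'`. By (the easy half of)
Kuratowski–Ulam, the comeagre set `𝒪_{n+1}` has a generic section `x'` whose fibre
`{y | (x', y) ∈ 𝒪_{n+1}}` is comeagre. Translating that fibre by a `g` with `g • x'` close to `x`
shows that `(x, z)` is `ε`-close to `𝒪_{n+1}` for comeagrely many `z`, for every `ε`, and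
`𝒪_{n+1}` is `∂`-closed. Conversely, if `(x, y)` is generic, Kuratowski–Ulam applied to the
`∂`-closure of its orbit gives, for comeagrely many `x'`, some `z` with `(x', z)` in that closure;
forgetting the last coordinate puts `x'` in the `∂`-closure of the orbit of `x`.
-/

open Set Filter Topology

section

variable {G X : Type*}

structure IsPseudoMetric (D : X → X → ℝ) : Prop where
  dist_self : ∀ x, D x x = 0
  dist_comm : ∀ x y, D x y = D y x
  dist_triangle : ∀ x y z, D x z ≤ D x y + D y z

structure IsIsometricAction [Group G] (D : X → X → ℝ) (a : G → X → X) : Prop where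
  map_one : ∀ x, a 1 x = x
  map_mul : ∀ g h x, a (g * h) x = a g (a h x)
  isometry : ∀ g x y, D (a g x) (a g y) = D x y

theorem IsPseudoMetric.nonneg {D : X → X → ℝ} (hD : IsPseudoMetric D) (x y : X) :
    0 ≤ D x y := by
  have := hD.dist_triangle x y x
  rw [hD.dist_self, hD.dist_comm y x] at this
  linarith

section supMet

variable {D : X → X → ℝ} {n : ℕ}

theorem le_supMet (x y : Fin n → X) (i : Fin n) : D (x i) (y i) ≤ supMet D x y :=
  le_ciSup (f := fun j => D (x j) (y j)) (finite_range _).bddAbove i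

theorem supMet_le {x y : Fin n → X} {c : ℝ} (hc : 0 ≤ c) (h : ∀ i, D (x i) (y i) ≤ c) :
    supMet D x y ≤ c :=
  Real.iSup_le h hc

theorem supMet_nonneg (hD : IsPseudoMetric D) (x y : Fin n → X) : 0 ≤ supMet D x y :=
  Real.iSup_nonneg fun _ => hD.nonneg _ _

theorem isPseudoMetric_supMet (hD : IsPseudoMetric D) (n : ℕ) :
    IsPseudoMetric (supMet D : (Fin n → X) → (Fin n → X) → ℝ) where
  dist_self _ :=
    le_antisymm (supMet_le le_rfl fun _ => (hD.dist_self _).le)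
      (Real.iSup_nonneg fun _ => (hD.dist_self _).ge)
  dist_comm _ _ := iSup_congr fun _ => hD.dist_comm _ _
  dist_triangle x y z :=
    supMet_le (add_nonneg (supMet_nonneg hD x y) (supMet_nonneg hD y z)) fun i =>
      (hD.dist_triangle _ (y i) _).trans (add_le_add (le_supMet x y i) (le_supMet y z i))

theorem supMet_snoc_snoc_self (hD : IsPseudoMetric D) (x x' : Fin n → X) (y : X) :
    supMet D (Fin.snoc x y) (Fin.snoc x' y) = supMet D x x' := by
  refine le_antisymm (supMet_le (supMet_nonneg hD x x') fun i => ?_)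
    (supMet_le (supMet_nonneg hD _ _) fun i => ?_)
  · induction i using Fin.lastCases with
    | last => simpa only [Fin.snoc_last, hD.dist_self] using supMet_nonneg hD x x'
    | cast j => simpa only [Fin.snoc_castSucc] using le_supMet x x' j
  · simpa only [Fin.snoc_castSucc] using le_supMet (Fin.snoc x y) (Fin.snoc x' y) i.castSucc

theorem supMet_init_le (hD : IsPseudoMetric D) (x y : Fin (n + 1) → X) :
    supMet D (Fin.init x) (Fin.init y) ≤ supMet D x y :=
  supMet_le ((hD.nonneg _ _).trans (le_supMet x y 0)) fun i => le_supMet x y i.castSucc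

end supMet

section orbit

variable {D : X → X → ℝ} {a : G → X → X} {n : ℕ}

theorem mem_orbitTup_iff {x y : Fin n → X} :
    y ∈ orbitTup a x ↔ ∃ g : G, (fun i => a g (x i)) = y :=
  exists_congr fun _ => funext_iff.symm

theorem init_mem_encl_orbitTup (hD : IsPseudoMetric D) {ε : ℝ} {w v : Fin (n + 1) → X}
    (h : w ∈ encl D ε (orbitTup a v)) : Fin.init w ∈ encl D ε (orbitTup a (Fin.init v)) := by
  obtain ⟨u, ⟨g, hg⟩, hwu⟩ := h
  exact ⟨Fin.init u, ⟨g, fun i => hg i.castSucc⟩, (supMet_init_le hD w u).trans_lt hwu⟩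

variable [Group G]

theorem IsIsometricAction.apply_inv_apply (ha : IsIsometricAction D a) (g : G) (x : X) :
    a g (a g⁻¹ x) = x := by
  rw [← ha.map_mul, mul_inv_cancel, ha.map_one]

theorem IsIsometricAction.supMet_apply (ha : IsIsometricAction D a) (g : G)
    (x y : Fin n → X) : supMet D (fun i => a g (x i)) (fun i => a g (y i)) = supMet D x y :=
  iSup_congr fun _ => ha.isometry g _ _

theorem mem_orbitTup_self (ha : IsIsometricAction D a) (x : Fin n → X) : x ∈ orbitTup a x :=
  ⟨1, fun _ => ha.map_one _⟩

theorem orbitTup_apply (ha : IsIsometricAction D a) (g : G) (x : Fin n → X) :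
    orbitTup a (fun i => a g (x i)) = orbitTup a x := by
  ext y
  simp only [mem_orbitTup_iff]
  constructor
  · rintro ⟨h, rfl⟩
    exact ⟨h * g, funext fun i => ha.map_mul h g (x i)⟩
  · rintro ⟨h, rfl⟩
    exact ⟨h * g⁻¹, funext fun i => by rw [← ha.map_mul, inv_mul_cancel_right]⟩

theorem mem_encl_orbitTup_comm (hD : IsPseudoMetric D) (ha : IsIsometricAction D a)
    {ε : ℝ} {x y : Fin n → X} (h : x ∈ encl D ε (orbitTup a y)) :
    y ∈ encl D ε (orbitTup a x) := by
  obtain ⟨_, hz, hxz⟩ := h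
  obtain ⟨g, rfl⟩ := mem_orbitTup_iff.1 hz
  refine ⟨fun i => a g⁻¹ (x i), ⟨g⁻¹, fun _ => rfl⟩, ?_⟩
  rw [← ha.supMet_apply g, (isPseudoMetric_supMet hD n).dist_comm]
  simpa only [ha.apply_inv_apply] using hxz

theorem mem_encl_orbitTup_trans (hD : IsPseudoMetric D) (ha : IsIsometricAction D a)
    {δ ε : ℝ} {x y z : Fin n → X} (hxy : x ∈ encl D δ (orbitTup a y))
    (hyz : y ∈ encl D ε (orbitTup a z)) : x ∈ encl D (δ + ε) (orbitTup a z) := by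
  obtain ⟨_, hy', hxy'⟩ := hxy
  obtain ⟨g, rfl⟩ := mem_orbitTup_iff.1 hy'
  obtain ⟨_, hz', hyz'⟩ := hyz
  obtain ⟨h, rfl⟩ := mem_orbitTup_iff.1 hz'
  refine ⟨fun i => a (g * h) (z i), ⟨g * h, fun _ => rfl⟩, ?_⟩
  calc supMet D x (fun i => a (g * h) (z i))
      ≤ supMet D x (fun i => a g (y i)) +
          supMet D (fun i => a g (y i)) (fun i => a g (a h (z i))) := by
        simpa only [ha.map_mul] using (isPseudoMetric_supMet hD n).dist_triangle _ _ _
    _ < δ + ε := by rw [ha.supMet_apply]; exact add_lt_add hxy' hyz'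

end orbit

section generics

variable {D : X → X → ℝ} {n : ℕ}

theorem encl_mono {ε ε' : ℝ} (h : ε ≤ ε') (A : Set (Fin n → X)) : encl D ε A ⊆ encl D ε' A :=
  fun _ ⟨y, hy, hd⟩ => ⟨y, hy, hd.trans_le h⟩

theorem metCl_mem_iff {A : Set (Fin n → X)} {f : Filter (Fin n → X)} [CountableInterFilter f] :
    metCl D A ∈ f ↔ ∀ ε > 0, encl D ε A ∈ f := by
  refine ⟨fun h ε hε => mem_of_superset h fun x hx => hx ε hε, fun h => ?_⟩
  have : ∀ᶠ x in f, ∀ k : ℕ, x ∈ encl D (1 / (k + 1)) A :=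
    eventually_countable_forall.2 fun k => h _ (by positivity)
  refine this.mono fun x hx ε hε => ?_
  obtain ⟨k, hk⟩ := exists_nat_one_div_lt hε
  obtain ⟨y, hy, hxy⟩ := hx k
  exact ⟨y, hy, hxy.trans hk⟩

theorem mem_metCl_orbitTup_self [Group G] {a : G → X → X} (hD : IsPseudoMetric D)
    (ha : IsIsometricAction D a) (x : Fin n → X) : x ∈ metCl D (orbitTup a x) :=
  fun _ hε => ⟨x, mem_orbitTup_self ha x, ((isPseudoMetric_supMet hD n).dist_self x).trans_lt hε⟩

variable [TopologicalSpace X]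

theorem mem_generics_iff {a : G → X → X} {x : Fin n → X} :
    x ∈ generics D a n ↔ ∀ ε > 0, encl D ε (orbitTup a x) ∈ residual (Fin n → X) :=
  metCl_mem_iff (f := residual (Fin n → X))

variable [Group G] {a : G → X → X}

theorem apply_mem_generics (ha : IsIsometricAction D a) (g : G) {x : Fin n → X}
    (hx : x ∈ generics D a n) : (fun i => a g (x i)) ∈ generics D a n := by
  rwa [generics, mem_ofPred_eq, orbitTup_apply ha]

theorem generics_mem_residual (hD : IsPseudoMetric D) (ha : IsIsometricAction D a)
    (hAG : ∀ ε > (0 : ℝ), ∃ x : Fin n → X, encl D ε (orbitTup a x) ∈ residual (Fin n → X)) :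
    generics D a n ∈ residual (Fin n → X) := by
  choose x hx using fun k : ℕ => hAG (1 / ((k : ℝ) + 1)) (by positivity)
  filter_upwards [eventually_countable_forall.2 hx] with z hz
  refine mem_generics_iff.2 fun ε hε => ?_
  obtain ⟨k, hk⟩ := exists_nat_one_div_lt (half_pos hε)
  refine mem_of_superset (hx k) fun v hv => encl_mono ?_ _
    (mem_encl_orbitTup_trans hD ha hv (mem_encl_orbitTup_comm hD ha (hz k)))
  linarith

theorem metCl_generics_subset (hD : IsPseudoMetric D) (ha : IsIsometricAction D a) :
    metCl D (generics D a n) ⊆ generics D a n := by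
  intro w hw
  refine mem_generics_iff.2 fun ε hε => ?_
  obtain ⟨u, hu, hwu⟩ := hw (ε / 2) (half_pos hε)
  have huw : u ∈ encl D (ε / 2) (orbitTup a w) :=
    mem_encl_orbitTup_comm hD ha ⟨u, mem_orbitTup_self ha u, hwu⟩
  refine mem_of_superset (mem_generics_iff.1 hu _ (half_pos hε)) fun v hv => ?_
  simpa only [add_halves] using mem_encl_orbitTup_trans hD ha hv huw

theorem mem_metCl_orbitTup_of_mem_generics [BaireSpace (Fin n → X)] (hD : IsPseudoMetric D)
    (ha : IsIsometricAction D a) {x x' : Fin n → X} (hx : x ∈ generics D a n)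
    (hx' : x' ∈ generics D a n) : x ∈ metCl D (orbitTup a x') := by
  intro ε hε
  have : Nonempty (Fin n → X) := ⟨x⟩
  obtain ⟨w, hwx, hwx'⟩ := (dense_of_mem_residual (inter_mem
    (mem_generics_iff.1 hx _ (half_pos hε)) (mem_generics_iff.1 hx' _ (half_pos hε)))).nonempty
  have := mem_encl_orbitTup_trans hD ha (mem_encl_orbitTup_comm hD ha hwx) hwx'
  rwa [add_halves] at this

end generics

section KuratowskiUlam

variable {α β : Type*} [TopologicalSpace α] [TopologicalSpace β]

theorem eventually_residual_exists_mem_of_dense_open {U : Set (α × β)} (hUo : IsOpen U)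
    (hUd : Dense U) {W : Set β} (hWo : IsOpen W) (hWne : W.Nonempty) :
    ∀ᶠ p in residual α, ∃ b ∈ W, (p, b) ∈ U := by
  refine residual_of_dense_open ?_ ?_
  · have : IsOpen (⋃ b ∈ W, {p : α | (p, b) ∈ U}) :=
      isOpen_biUnion fun b _ => hUo.preimage (Continuous.prodMk_left b)
    simpa only [← ofPred_exists, exists_prop] using this
  · refine dense_iff_inter_open.2 fun O hO hOne => ?_
    obtain ⟨⟨p, b⟩, ⟨hpO, hbW⟩, hpb⟩ :=
      hUd.inter_open_nonempty _ (hO.prod hWo) (hOne.prod hWne)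
    exact ⟨p, hpO, b, hbW, hpb⟩

theorem eventually_residual_fiber_of_dense_open [SecondCountableTopology β] {U : Set (α × β)}
    (hUo : IsOpen U) (hUd : Dense U) : ∀ᶠ p in residual α, ∀ᶠ b in residual β, (p, b) ∈ U := by
  obtain ⟨B, hBc, -, hB⟩ := TopologicalSpace.exists_countable_basis β
  have : ∀ᶠ p in residual α, ∀ W ∈ B, W.Nonempty → ∃ b ∈ W, (p, b) ∈ U := by
    refine (eventually_countable_ball hBc).2 fun W hW => ?_
    rcases W.eq_empty_or_nonempty with rfl | hWne
    · exact .of_forall fun _ hne => absurd rfl hne.ne_empty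
    · exact (eventually_residual_exists_mem_of_dense_open hUo hUd (hB.isOpen hW) hWne).mono
        fun _ h _ => h
  filter_upwards [this] with p hp
  refine residual_of_dense_open (hUo.preimage (Continuous.prodMk_right p))
    (hB.dense_iff.2 fun W hW hWne => ?_)
  obtain ⟨b, hbW, hb⟩ := hp W hW hWne
  exact ⟨b, hbW, hb⟩

theorem curry_residual_le_residual_prod [SecondCountableTopology β] :
    (residual α).curry (residual β) ≤ residual (α × β) :=
  le_countableGenerate_iff_of_countableInterFilter.2 fun _ ⟨hUo, hUd⟩ =>
    eventually_curry_iff.2 (eventually_residual_fiber_of_dense_open hUo hUd)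

end KuratowskiUlam

theorem eventually_residual_snoc [TopologicalSpace X] [SecondCountableTopology X] {n : ℕ}
    {p : (Fin (n + 1) → X) → Prop} (h : ∀ᶠ w in residual (Fin (n + 1) → X), p w) :
    ∀ᶠ x in residual (Fin n → X), ∀ᶠ y in residual X, p (Fin.snoc x y) := by
  let e : (Fin n → X) × X ≃ₜ (Fin (n + 1) → X) :=
    { toFun := fun q => Fin.snoc q.1 q.2
      invFun := fun w => (Fin.init w, w (Fin.last n))
      left_inv := fun q => by simp
      right_inv := Fin.snoc_init_self
      continuous_toFun := by fun_prop
      continuous_invFun := by fun_prop }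
  rw [← e.residual_map_eq] at h
  exact eventually_curry_iff.1 (curry_residual_le_residual_prod h)

section extension

variable [Group G] [TopologicalSpace X] {D : X → X → ℝ} {a : G → X → X} {n : ℕ}

theorem IsIsometricAction.eventually_residual_of_eventually_apply (ha : IsIsometricAction D a)
    (hcont : ∀ g, Continuous (a g)) (g : G) {p : X → Prop}
    (h : ∀ᶠ y in residual X, p (a g y)) : ∀ᶠ z in residual X, p z := by
  let e : X ≃ₜ X :=
    { toFun := a g
      invFun := a g⁻¹
      left_inv := fun x => by rw [← ha.map_mul, inv_mul_cancel, ha.map_one]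
      right_inv := ha.apply_inv_apply g
      continuous_toFun := hcont g
      continuous_invFun := hcont g⁻¹ }
  rw [← e.residual_map_eq]
  exact h

theorem eventually_snoc_mem_generics [BaireSpace (Fin n → X)] (hD : IsPseudoMetric D)
    (ha : IsIsometricAction D a) (hcont : ∀ g, Continuous (a g)) {x x' : Fin n → X}
    (hx : x ∈ generics D a n) (hx' : x' ∈ generics D a n)
    (hfib : ∀ᶠ y in residual X, Fin.snoc x' y ∈ generics D a (n + 1)) :
    ∀ᶠ z in residual X, Fin.snoc x z ∈ generics D a (n + 1) := by
  have : ∀ᶠ z in residual X, Fin.snoc x z ∈ metCl D (generics D a (n + 1)) := by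
    refine (metCl_mem_iff (f := map (Fin.snoc x) (residual X))).2 fun ε hε => ?_
    obtain ⟨_, hy, hxy⟩ := mem_metCl_orbitTup_of_mem_generics hD ha hx hx' ε hε
    obtain ⟨g, rfl⟩ := mem_orbitTup_iff.1 hy
    refine ha.eventually_residual_of_eventually_apply hcont g (hfib.mono fun y hy => ?_)
    refine ⟨a g ∘ Fin.snoc x' y, apply_mem_generics ha g hy, ?_⟩
    rw [Fin.comp_snoc, supMet_snoc_snoc_self hD]
    exact hxy
  exact this.mono fun z hz => metCl_generics_subset hD ha hz

theorem mem_generics_of_eventually_snoc [BaireSpace X] [SecondCountableTopology X]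
    (hD : IsPseudoMetric D) (ha : IsIsometricAction D a) {x : Fin n → X}
    (hfib : ∀ᶠ y in residual X, Fin.snoc x y ∈ generics D a (n + 1)) : x ∈ generics D a n := by
  rcases isEmpty_or_nonempty X with hX | hX
  · have : Subsingleton (Fin n → X) := ⟨fun u _ => funext fun i => isEmptyElim (u i)⟩
    have : metCl D (orbitTup a x) = univ := eq_univ_of_forall fun z =>
      Subsingleton.elim x z ▸ mem_metCl_orbitTup_self hD ha x
    rw [generics, mem_ofPred_eq, this]
    exact univ_mem
  obtain ⟨y, hy⟩ := (dense_of_mem_residual hfib).nonempty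
  show metCl D (orbitTup a x) ∈ residual (Fin n → X)
  filter_upwards [eventually_residual_snoc hy] with x' hx'
  obtain ⟨z, hz⟩ := (dense_of_mem_residual hx').nonempty
  intro ε hε
  have := init_mem_encl_orbitTup hD (hz ε hε)
  simp only [Fin.init_snoc] at this
  exact this

end extension

end

theorem stmt_6_general
    {G X : Type*} [Group G] [TopologicalSpace G]
    [TopologicalSpace X] [PolishSpace X]
    (D : X → X → ℝ)
    (hD_eq : ∀ x y : X, D x y = 0 ↔ x = y)
    (hD_symm : ∀ x y : X, D x y = D y x)
    (hD_tri : ∀ x y z : X, D x z ≤ D x y + D y z)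
    (a : G → X → X)
    (ha_one : ∀ x : X, a 1 x = x)
    (ha_mul : ∀ g h : G, ∀ x : X, a (g * h) x = a g (a h x))
    (ha_cont : Continuous fun p : G × X => a p.1 p.2)
    (ha_iso : ∀ g : G, ∀ x y : X, D (a g x) (a g y) = D x y)
    (hAG : ∀ n : ℕ, ∀ ε > (0 : ℝ), ∃ x : Fin n → X,
      encl D ε (orbitTup a x) ∈ residual (Fin n → X))
    (n : ℕ) :
    generics D a n =
      {x : Fin n → X | {y : X | Fin.snoc x y ∈ generics D a (n + 1)} ∈ residual X} := by
  have hD : IsPseudoMetric D := ⟨fun x => (hD_eq x x).2 rfl, hD_symm, hD_tri⟩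
  have ha : IsIsometricAction D a := ⟨ha_one, ha_mul, ha_iso⟩
  have hcont : ∀ g, Continuous (a g) := fun g => ha_cont.comp (Continuous.prodMk_right g)
  ext x
  refine ⟨fun hx => ?_, mem_generics_of_eventually_snoc hD ha⟩
  have : Nonempty (Fin n → X) := ⟨x⟩
  obtain ⟨x', hx', hfib⟩ := (dense_of_mem_residual (inter_mem (generics_mem_residual hD ha (hAG n))
    (eventually_residual_snoc (generics_mem_residual hD ha (hAG (n + 1)))))).nonempty
  exact eventually_snoc_mem_generics hD ha hcont hx hx' hfib

/-- For a topometric action with ample generics, a tuple `x : Xⁿ` is generic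
iff for comeagrely many `y ∈ X` the extended tuple `(x,y)` is generic. -/
theorem stmt_6
    {G X : Type*} [Group G] [TopologicalSpace G] [IsTopologicalGroup G] [PolishSpace G]
    [TopologicalSpace X] [PolishSpace X]
    (D : X → X → ℝ)
    (hD_eq : ∀ x y : X, D x y = 0 ↔ x = y)
    (hD_symm : ∀ x y : X, D x y = D y x)
    (hD_tri : ∀ x y z : X, D x z ≤ D x y + D y z)
    (hD_ref : ∀ U : Set X, IsOpen U → ∀ x ∈ U, ∃ ε > (0 : ℝ), {y | D x y < ε} ⊆ U)
    (hD_lsc : ∀ r : ℝ, IsClosed {p : X × X | D p.1 p.2 ≤ r})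
    (a : G → X → X)
    (ha_one : ∀ x : X, a 1 x = x)
    (ha_mul : ∀ g h : G, ∀ x : X, a (g * h) x = a g (a h x))
    (ha_cont : Continuous fun p : G × X => a p.1 p.2)
    (ha_iso : ∀ g : G, ∀ x y : X, D (a g x) (a g y) = D x y)
    (hAG : ∀ n : ℕ, ∀ ε > (0 : ℝ), ∃ x : Fin n → X,
      encl D ε (orbitTup a x) ∈ residual (Fin n → X))
    (n : ℕ) :
    generics D a n =
      {x : Fin n → X | {y : X | Fin.snoc x y ∈ generics D a (n + 1)} ∈ residual X} :=
  stmt_6_general D hD_eq hD_symm hD_tri a ha_one ha_mul ha_cont ha_iso hAG n
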